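/- Let k be a commutative ring, A a k-module, and suppose (∘, •) is a linearly compatible di-algebra structure on A. Then for any scalars λ, μ, λ', μ' ∈ k, the pair of k-bilinear operations c(x,y) = λ·(x∘y) + μ·(x•y) and d(x,y) = λ'·(x∘y) + μ'·(x•y) is again a linearly compatible di-algebra structure on A. -/
import Mathlib


/-- A pair of `k`-bilinear operations `a` ("∘") and `b` ("•") on a `k`-module `A`
is a *linearly compatible di-algebra structure* if `a` and `b` are each associative
and `(x•y)∘z + (x∘y)•z = x•(y∘z) + x∘(y•z)` for all `x y z`. -/
def IsLinearlyCompatibleDialgebra {k A : Type*} [CommRing k] [AddCommGroup A] [Module k A]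
    (a b : A →ₗ[k] A →ₗ[k] A) : Prop :=
  (∀ x y z : A, a (a x y) z = a x (a y z)) ∧
  (∀ x y z : A, b (b x y) z = b x (b y z)) ∧
  (∀ x y z : A, a (b x y) z + b (a x y) z = b x (a y z) + a x (b y z))

/-- If `(a, b)` is a linearly compatible di-algebra structure on `A`,
then for any scalars `l, m, l', m' : k` the pair of bilinear operations
`c x y = l • a x y + m • b x y` and `d x y = l' • a x y + m' • b x y`
is again a linearly compatible di-algebra structure on `A`. -/
theorem linear_combinations_of_linearly_compatible_are_linearly_compatible
    {k A : Type*} [CommRing k] [AddCommGroup A] [Module k A]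
    (a b : A →ₗ[k] A →ₗ[k] A) (h : IsLinearlyCompatibleDialgebra a b)
    (l m l' m' : k) :
    IsLinearlyCompatibleDialgebra (l • a + m • b) (l' • a + m' • b) := by
  obtain ⟨h1, h2, h3⟩ := h
  refine ⟨fun x y z => ?_, fun x y z => ?_, fun x y z => ?_⟩
  · simp only [LinearMap.add_apply, LinearMap.smul_apply, map_add, map_smul]
    linear_combination (norm := module) (l*l) • h1 x y z + (m*m) • h2 x y z +
      (l*m) • h3 x y z
  · simp only [LinearMap.add_apply, LinearMap.smul_apply, map_add, map_smul]
    linear_combination (norm := module) (l'*l') • h1 x y z + (m'*m') • h2 x y z +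
      (l'*m') • h3 x y z
  · simp only [LinearMap.add_apply, LinearMap.smul_apply, map_add, map_smul]
    linear_combination (norm := module) (l*l'+l'*l) • h1 x y z + (m*m'+m'*m) • h2 x y z +
      (l*m'+l'*m) • h3 x y z
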